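/- arXiv:1607.00703 — 3 statements merged into one kernel-verified Lean document; each statement's English description precedes it below -/
import Mathlib

section
/- There is no continuous map σ : S²₊ × S²₊ → (S²₊)^I with σ(p,q)(0) = p, σ(p,q)(1) = q, and ℓ(σ(p,q)) = d(p,q) for all p, q, where S²₊ is the closed upper hemisphere of the unit 2-sphere with its intrinsic metric. In other words, there is no continuous motion planner on the hemisphere all of whose output paths are minimizing geodesics. -/
open Set MeasureTheory unitInterval
open scoped Manifold ENNReal NNReal InnerProductSpace

noncomputable section

/-- The (metric) length of a path `γ : [0,1] → X`, possibly infinite. -/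
def pathLen {X : Type*} [PseudoEMetricSpace X] (γ : unitInterval → X) : ℝ≥0∞ :=
  eVariationOn γ Set.univ

/-- An `m`-motion planner on `X`: a family of `m + 1` continuous local sections of the
endpoint fibration `π : X^I → X × X`, `π γ = (γ 0, γ 1)`, whose domains of continuity are
locally compact, pairwise disjoint and cover `X × X`. -/
structure MotionPlanner (X : Type*) [TopologicalSpace X] (m : ℕ) where
  G : Fin (m + 1) → Set (X × X)
  sec : ∀ i, C((G i : Set (X × X)), C(unitInterval, X))
  locallyCompact : ∀ i, LocallyCompactSpace (G i)
  disj : ∀ i j, i ≠ j → Disjoint (G i) (G j)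
  covers : ⋃ i, G i = Set.univ
  sec_zero : ∀ i (x : G i), sec i x 0 = (x : X × X).1
  sec_one : ∀ i (x : G i), sec i x 1 = (x : X × X).2

namespace MotionPlanner

variable {X : Type*} [TopologicalSpace X] {m : ℕ}

/-- The output path of a motion planner at a pair of states `x = (p, q)`. -/
def path (P : MotionPlanner X m) (x : X × X) : unitInterval → X :=
  have h : ∃ i, x ∈ P.G i := Set.mem_iUnion.1 (by rw [P.covers]; exact Set.mem_univ x)
  P.sec h.choose ⟨x, h.choose_spec⟩

/-- The length of a motion planner: the integral over `X × X` of the lengths of the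
output paths. -/
def length {X : Type*} [PseudoMetricSpace X] [MeasurableSpace X] {m : ℕ}
    (P : MotionPlanner X m) (μ : Measure (X × X)) : ℝ≥0∞ :=
  ∫⁻ x, pathLen (P.path x) ∂μ

end MotionPlanner

/-- Farber's topological complexity of `X` (as an element of `ℕ∞`, `⊤` meaning that no
motion planner exists). -/
def topComplexity (X : Type*) [TopologicalSpace X] : ℕ∞ :=
  sInf {N : ℕ∞ | ∃ m : ℕ, N = m ∧ Nonempty (MotionPlanner X m)}

/-- Efficient topological complexity of a metric measure space: the minimal `m` admitting an
`m`-motion planner whose length equals the integral of the distance function. -/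
def eTopComplexity (X : Type*) [PseudoMetricSpace X] [MeasurableSpace X]
    (μ : Measure (X × X)) : ℕ∞ :=
  sInf {N : ℕ∞ | ∃ m : ℕ, N = m ∧ ∃ P : MotionPlanner X m,
    P.length μ = ∫⁻ x : X × X, edist x.1 x.2 ∂μ}

/-- A package of classical data and facts constituting the structure of a smooth closed
Riemannian manifold on `X` (a smooth compact boundaryless manifold whose metric-space
distance is the Riemannian distance): the exponential maps `exp p`, the maximal normal
neighbourhoods `U p ⊆ T_p X`, the cut loci `cut p`, and the Riemannian volume `vol`. -/
structure RiemannPackage (n : ℕ) (X : Type*) [MetricSpace X]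
    [ChartedSpace (EuclideanSpace ℝ (Fin n)) X]
    [IsManifold (𝓡 n) (⊤ : ℕ∞) X] [CompactSpace X]
    [MeasurableSpace X] [BorelSpace X] : Type _ where
  /-- The exponential map of `X` at each point, `T_p X ≅ ℝⁿ → X`. -/
  exp : X → EuclideanSpace ℝ (Fin n) → X
  /-- The maximal normal neighbourhood of `0` in `T_p X`. -/
  U : X → Set (EuclideanSpace ℝ (Fin n))
  /-- The cut locus of each point. -/
  cut : X → Set X
  /-- The Riemannian volume measure. -/
  vol : Measure X
  U_open : ∀ p, IsOpen (U p)
  zero_mem_U : ∀ p, (0 : EuclideanSpace ℝ (Fin n)) ∈ U p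
  U_star : ∀ p, ∀ v ∈ U p, ∀ t : ℝ, t ∈ Set.Icc (0 : ℝ) 1 → t • v ∈ U p
  exp_zero : ∀ p, exp p 0 = p
  /-- `exp p` maps the maximal normal neighbourhood bijectively onto `X ∖ cut p`. -/
  exp_bijOn : ∀ p, Set.BijOn (exp p) (U p) (cut p)ᶜ
  cut_closed : ∀ p, IsClosed (cut p)
  not_mem_cut_self : ∀ p, p ∉ cut p
  cut_symm : ∀ p q, q ∈ cut p ↔ p ∈ cut q
  /-- `exp` is smooth jointly in the base point and the tangent vector. -/
  exp_smooth : ContMDiff ((𝓡 n).prod (𝓡 n)) (𝓡 n) (⊤ : ℕ∞)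
    (fun pv : X × EuclideanSpace ℝ (Fin n) => exp pv.1 pv.2)
  /-- Radial geodesics inside the maximal normal neighbourhood are minimizing, with constant
  speed: `t ↦ exp p (t • v)` realizes the distance proportionally. -/
  exp_dist : ∀ p, ∀ v ∈ U p, ∀ s ∈ Set.Icc (0 : ℝ) 1, ∀ t ∈ Set.Icc (0 : ℝ) 1,
    dist (exp p (s • v)) (exp p (t • v)) = |s - t| * dist p (exp p v)
  /-- Every constant-speed minimizing geodesic from `p` with endpoint off the cut locus of `p`
  is a radial exponential curve. -/
  geodesic_rep : ∀ p, ∀ γ : unitInterval → X, γ 0 = p → (γ 1 ∉ cut p) →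
    (∀ s t : unitInterval, dist (γ s) (γ t) = |s.1 - t.1| * dist p (γ 1)) →
    ∃ v ∈ U p, ∀ t : unitInterval, γ t = exp p (t.1 • v)
  vol_finite : vol Set.univ < ⊤
  /-- The Riemannian volume has full support. -/
  vol_open_pos : ∀ s : Set X, IsOpen s → s.Nonempty → 0 < vol s

namespace RiemannPackage

variable {n : ℕ} {X : Type*} [MetricSpace X]
  [ChartedSpace (EuclideanSpace ℝ (Fin n)) X]
  [IsManifold (𝓡 n) (⊤ : ℕ∞) X] [CompactSpace X]
  [MeasurableSpace X] [BorelSpace X]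

/-- The Riemannian volume of the product `X × X`. -/
def prodVol (R : RiemannPackage n X) : Measure (X × X) := R.vol.prod R.vol

/-- The open set `V = {(p,q) | q ∉ Cut(p)}` of pairs joined by a unique minimizing
geodesic. -/
def V (R : RiemannPackage n X) : Set (X × X) := {x | x.2 ∉ R.cut x.1}

/-- The inverse of the exponential map at `p`, defined on `X ∖ cut p`. -/
def expInv (R : RiemannPackage n X) (p : X) (q : X) : EuclideanSpace ℝ (Fin n) :=
  Function.invFunOn (R.exp p) (R.U p) q

/-- The geodesic motion planner `σ₀ (p,q) (t) = exp p (t • exp p ⁻¹ q)`, as a map `ℝ → X`. -/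
def geo (R : RiemannPackage n X) (x : X × X) : ℝ → X :=
  fun t => R.exp x.1 (t • R.expInv x.1 x.2)

end RiemannPackage

/-- The closed upper hemisphere of the unit 2-sphere (with the subspace topology; its
chordal metric induces the same path lengths as the intrinsic Riemannian metric, whose
distance function is `(p, q) ↦ arccos ⟪p, q⟫`). -/
abbrev Hemi : Type := {x : EuclideanSpace ℝ (Fin 3) // ‖x‖ = 1 ∧ 0 ≤ x 2}

/-!
Write `equator θ = (cos θ, sin θ, 0)` for the points of the boundary circle. The length of a
path on the sphere dominates the angle between its endpoints, because chord and arc agree to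
first order. So a path of length `angle p q` from `p` to `q` satisfies
`angle p y + angle y q = angle p q` at each of its points `y`, and when `angle p q < π` this
equality case of the triangle inequality puts `y` in the cone spanned by `p` and `q`. Hence the
planner's path from `equator 0` to `equator θ` lies in the equatorial plane, on the side where
the second coordinate has the sign of `sin θ`. Letting `θ → π` from both sides, the path from
`equator 0` to `equator π = -equator 0` is confined to the first coordinate axis, which meets
the sphere only in these two antipodal points: impossible for a connected path.
-/

open Real InnerProductGeometry

theorem le_sum_range_succ_of_triangle {X : Type*} {D : X → X → ℝ}
    (hD : ∀ x y z, D x z ≤ D x y + D y z) (f : ℕ → X) (n : ℕ) :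
    D (f 0) (f (n + 1)) ≤ ∑ i ∈ Finset.range (n + 1), D (f i) (f (i + 1)) := by
  induction n with
  | zero => simp
  | succ n ih => rw [Finset.sum_range_succ]; linarith [hD (f 0) (f (n + 1)) (f (n + 2))]

theorem ofReal_mul_le_eVariationOn_of_locally_le {X : Type*} [PseudoMetricSpace X]
    {D : X → X → ℝ} (hD : ∀ x y z, D x z ≤ D x y + D y z) {γ : ℝ → X} {a b : ℝ}
    (hab : a ≤ b) (hγ : ContinuousOn γ (Icc a b)) {c ε : ℝ} (hc : 0 ≤ c) (hε : 0 < ε)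
    (hloc : ∀ s ∈ Icc a b, ∀ t ∈ Icc a b,
      dist (γ s) (γ t) < ε → c * D (γ s) (γ t) ≤ dist (γ s) (γ t)) :
    ENNReal.ofReal (c * D (γ a) (γ b)) ≤ eVariationOn γ (Icc a b) := by
  obtain ⟨u, hu0, hu, ⟨n, hun⟩, hsub⟩ := exists_monotone_Icc_subset_open_cover_Icc hab
    (c := fun x : Icc a b => (Icc a b).domRestrict γ ⁻¹' Metric.ball (γ x) (ε / 2))
    (fun x => Metric.isOpen_ball.preimage hγ.domRestrict)
    (fun x _ => mem_iUnion.2 ⟨x, Metric.mem_ball_self (half_pos hε)⟩)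
  have hclose : ∀ i, dist (γ (u i)) (γ (u (i + 1))) < ε := by
    intro i
    obtain ⟨x, hx⟩ := hsub i
    have h₁ := hx (left_mem_Icc.2 (hu i.le_succ))
    have h₂ := hx (right_mem_Icc.2 (hu i.le_succ))
    simp only [mem_preimage, domRestrict_apply, Metric.mem_ball] at h₁ h₂
    linarith [dist_triangle_right (γ (u i)) (γ (u (i + 1))) (γ x)]
  have hchain := le_sum_range_succ_of_triangle hD (fun i => γ (u i)) n
  simp only [hu0, hun (n + 1) n.le_succ] at hchain
  calc ENNReal.ofReal (c * D (γ a) (γ b))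
      ≤ ENNReal.ofReal (∑ i ∈ Finset.range (n + 1), dist (γ (u (i + 1))) (γ (u i))) := by
        refine ENNReal.ofReal_le_ofReal ((mul_le_mul_of_nonneg_left hchain hc).trans ?_)
        rw [Finset.mul_sum]
        refine Finset.sum_le_sum fun i _ => ?_
        rw [dist_comm (γ (u (i + 1)))]
        exact hloc _ (u i).2 _ (u (i + 1)).2 (hclose i)
    _ = ∑ i ∈ Finset.range (n + 1), edist (γ (u (i + 1))) (γ (u i)) := by
        rw [ENNReal.ofReal_sum_of_nonneg fun i _ => dist_nonneg]
        simp only [edist_dist]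
    _ ≤ eVariationOn γ (Icc a b) :=
        eVariationOn.sum_le (u := fun i => (u i : ℝ)) (fun i j hij => hu hij) fun i => (u i).2

theorem Real.mul_cos_le_sin {u : ℝ} (h₀ : 0 ≤ u) (h₁ : u ≤ π / 2) : u * cos u ≤ sin u := by
  rcases h₁.lt_or_eq with h | rfl
  · have hcos : 0 < cos u := cos_pos_of_mem_Ioo ⟨by linarith [pi_pos], h⟩
    have := le_tan h₀ h
    rwa [tan_eq_sin_div_cos, le_div_iff₀ hcos] at this
  · simp

namespace InnerProductGeometry

variable {V : Type*} [NormedAddCommGroup V] [InnerProductSpace ℝ V]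

theorem angle_eq_arccos_inner {x y : V} (hx : ‖x‖ = 1) (hy : ‖y‖ = 1) :
    angle x y = arccos ⟪x, y⟫_ℝ := by
  simp [angle, hx, hy]

theorem norm_sub_eq_two_mul_sin_half_angle {x y : V} (hx : ‖x‖ = 1) (hy : ‖y‖ = 1) :
    ‖x - y‖ = 2 * sin (angle x y / 2) := by
  have hcos := norm_sub_sq_eq_norm_sq_add_norm_sq_sub_two_mul_norm_mul_norm_mul_cos_angle x y
  have hsin : 0 ≤ sin (angle x y / 2) :=
    sin_nonneg_of_nonneg_of_le_pi (by linarith [angle_nonneg x y])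
      (by linarith [angle_le_pi x y, pi_pos])
  rw [hx, hy] at hcos
  refine (pow_left_inj₀ (norm_nonneg _) (by positivity) two_ne_zero).1 ?_
  rw [sq, hcos, mul_pow, sin_sq_eq_half_sub, mul_div_cancel₀ _ two_ne_zero]
  ring

theorem mul_angle_le_norm_sub {x y : V} (hx : ‖x‖ = 1) (hy : ‖y‖ = 1) {c : ℝ}
    (hc : c ^ 2 + ‖x - y‖ ^ 2 / 4 ≤ 1) : c * angle x y ≤ ‖x - y‖ := by
  set u := angle x y / 2 with hu
  have hu₀ : 0 ≤ u := by linarith [angle_nonneg x y]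
  have hu₁ : u ≤ π / 2 := by linarith [angle_le_pi x y]
  have hcos : 0 ≤ cos u := cos_nonneg_of_neg_pi_div_two_le_of_le (by linarith) hu₁
  rw [norm_sub_eq_two_mul_sin_half_angle hx hy, ← hu] at hc ⊢
  have hcu : c ≤ cos u :=
    (le_abs_self c).trans (abs_le_of_sq_le_sq (by nlinarith [sin_sq_add_cos_sq u]) hcos)
  calc c * angle x y = 2 * (c * u) := by rw [hu]; ring
    _ ≤ 2 * (u * cos u) := by nlinarith
    _ ≤ 2 * sin u := by linarith [mul_cos_le_sin hu₀ hu₁]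

theorem ofReal_angle_le_eVariationOn {γ : ℝ → V} {a b : ℝ} (hab : a ≤ b)
    (hγ : ContinuousOn γ (Icc a b)) (hγ₁ : ∀ t ∈ Icc a b, ‖γ t‖ = 1) :
    ENNReal.ofReal (angle (γ a) (γ b)) ≤ eVariationOn γ (Icc a b) := by
  refine ENNReal.le_of_forall_lt_one_mul_le fun r hr => ?_
  have hr' : r ≠ ⊤ := ne_top_of_lt hr
  set c := r.toReal
  have hc₀ : 0 ≤ c := ENNReal.toReal_nonneg
  have hc₁ : c < 1 := by simpa using (ENNReal.toReal_lt_toReal hr' ENNReal.one_ne_top).2 hr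
  have hε : 0 < 1 - c ^ 2 := by nlinarith
  rw [← ENNReal.ofReal_toReal hr', ← ENNReal.ofReal_mul hc₀]
  refine ofReal_mul_le_eVariationOn_of_locally_le angle_le_angle_add_angle hab hγ hc₀
    (by positivity : 0 < 2 * √(1 - c ^ 2)) fun s hs t ht hst => ?_
  rw [dist_eq_norm] at hst ⊢
  refine mul_angle_le_norm_sub (hγ₁ s hs) (hγ₁ t ht) ?_
  nlinarith [sq_sqrt hε.le, norm_nonneg (γ s - γ t)]

theorem ofReal_angle_le_eVariationOn_unitInterval {γ : I → V} (hγ : Continuous γ)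
    (hγ₁ : ∀ t, ‖γ t‖ = 1) {s t : I} (hst : s ≤ t) :
    ENNReal.ofReal (angle (γ s) (γ t)) ≤ eVariationOn γ (Icc s t) := by
  have h := ofReal_angle_le_eVariationOn (γ := IccExtend zero_le_one γ) hst
    hγ.Icc_extend'.continuousOn fun x _ => by rw [IccExtend_apply]; exact hγ₁ _
  rw [IccExtend_val, IccExtend_val] at h
  refine h.trans (eVariationOn.comp_le_of_monotoneOn γ _ ((monotone_projIcc _).monotoneOn _) ?_)
  intro x hx
  rw [projIcc_of_mem _ ⟨s.2.1.trans hx.1, hx.2.trans t.2.2⟩]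
  exact hx

theorem angle_add_angle_eq_of_eVariationOn_eq {γ : I → V} (hγ : Continuous γ)
    (hγ₁ : ∀ t, ‖γ t‖ = 1) (hlen : eVariationOn γ univ = ENNReal.ofReal (angle (γ 0) (γ 1)))
    (t : I) : angle (γ 0) (γ t) + angle (γ t) (γ 1) = angle (γ 0) (γ 1) := by
  have hadd := eVariationOn.Icc_add_Icc γ (s := univ) nonneg' le_one' (mem_univ t)
  rw [univ_inter, univ_inter, univ_inter, ← univ_eq_Icc, hlen] at hadd
  refine le_antisymm ?_ (angle_le_angle_add_angle _ _ _)
  rw [← ENNReal.ofReal_le_ofReal_iff (angle_nonneg _ _),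
    ENNReal.ofReal_add (angle_nonneg _ _) (angle_nonneg _ _), ← hadd]
  exact add_le_add (ofReal_angle_le_eVariationOn_unitInterval hγ hγ₁ nonneg')
    (ofReal_angle_le_eVariationOn_unitInterval hγ hγ₁ le_one')

theorem mem_span_of_eVariationOn_eq {γ : I → V} (hγ : Continuous γ)
    (hγ₁ : ∀ t, ‖γ t‖ = 1) (hlen : eVariationOn γ univ = ENNReal.ofReal (angle (γ 0) (γ 1)))
    (hπ : angle (γ 0) (γ 1) ≠ π) (t : I) : γ t ∈ Submodule.span ℝ≥0 {γ 0, γ 1} :=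
  ((angle_eq_angle_add_angle_iff (norm_ne_zero_iff.1 (by simp [hγ₁ t]))).1
    (angle_add_angle_eq_of_eVariationOn_eq hγ hγ₁ hlen t).symm).resolve_left hπ

end InnerProductGeometry

def equator (θ : ℝ) : EuclideanSpace ℝ (Fin 3) := !₂[cos θ, sin θ, 0]

theorem norm_equator (θ : ℝ) : ‖equator θ‖ = 1 := by
  simp [equator, EuclideanSpace.norm_eq, Fin.sum_univ_three]

theorem inner_equator_zero (θ : ℝ) : ⟪equator 0, equator θ⟫_ℝ = cos θ := by
  simp [equator, PiLp.inner_apply, Fin.sum_univ_three]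

theorem angle_equator_zero_ne_pi {θ : ℝ} (hθ : sin θ ≠ 0) :
    angle (equator 0) (equator θ) ≠ π := by
  rw [angle_eq_arccos_inner (norm_equator 0) (norm_equator θ), inner_equator_zero, Ne,
    arccos_eq_pi]
  intro h
  exact hθ (by nlinarith [sin_sq_add_cos_sq θ, neg_one_le_cos θ])

theorem two_eq_zero_and_mul_sin_nonneg_of_mem_span_equator {θ : ℝ} {y : EuclideanSpace ℝ (Fin 3)}
    (hy : y ∈ Submodule.span ℝ≥0 {equator 0, equator θ}) : y 2 = 0 ∧ 0 ≤ y 1 * sin θ := by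
  obtain ⟨p, q, rfl⟩ := Submodule.mem_span_pair.1 hy
  simpa [equator, NNReal.smul_def, mul_assoc] using mul_nonneg q.2 (mul_self_nonneg (sin θ))

theorem eq_zero_at_pi_of_mul_sin_nonneg {g : ℝ → ℝ} (hg : Continuous g)
    (h : ∀ θ, sin θ ≠ 0 → 0 ≤ g θ * sin θ) : g π = 0 := by
  have hleft : ∀ θ ∈ Ioo 0 π, 0 ≤ g θ := fun θ hθ => by
    have hs := sin_pos_of_pos_of_lt_pi hθ.1 hθ.2
    nlinarith [h θ hs.ne']
  have hright : ∀ θ ∈ Ioo π (2 * π), g θ ≤ 0 := fun θ hθ => by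
    have hs : sin θ < 0 := by
      rw [← sin_sub_two_pi]
      exact sin_neg_of_neg_of_neg_pi_lt (by linarith [hθ.2]) (by linarith [hθ.1])
    nlinarith [h θ hs.ne]
  have hgπ := hg.tendsto π
  refine le_antisymm ?_ ?_
  · exact le_of_tendsto (hgπ.mono_left nhdsWithin_le_nhds)
      (Filter.mem_of_superset (Ioo_mem_nhdsGT (by linarith [pi_pos])) hright)
  · exact ge_of_tendsto (hgπ.mono_left nhdsWithin_le_nhds)
      (Filter.mem_of_superset (Ioo_mem_nhdsLT pi_pos) hleft)

theorem exists_coord_ne_zero_of_path {γ : I → EuclideanSpace ℝ (Fin 3)} (hγ : Continuous γ)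
    (hγ₁ : ∀ t, ‖γ t‖ = 1) (h₀ : γ 0 0 = 1) (h₁ : γ 1 0 = -1) : ∃ t, γ t 1 ≠ 0 ∨ γ t 2 ≠ 0 := by
  obtain ⟨t, ht⟩ : ∃ t, γ t 0 = 0 :=
    intermediate_value_univ 1 0 (f := fun t => γ t 0) (by fun_prop)
      (show (0 : ℝ) ∈ Icc (γ 1 0) (γ 0 0) by rw [h₀, h₁]; norm_num)
  refine ⟨t, ?_⟩
  by_contra! h
  have := hγ₁ t
  simp [EuclideanSpace.norm_eq, Fin.sum_univ_three, ht, h.1, h.2] at this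

def equatorHemi (θ : ℝ) : Hemi := ⟨equator θ, norm_equator θ, by simp [equator]⟩

@[fun_prop]
theorem continuous_equatorHemi : Continuous equatorHemi :=
  Continuous.subtype_mk (by unfold equator; fun_prop) _

/-- there is no continuous motion planner on the closed upper hemisphere all
of whose output paths are minimizing, i.e. have length equal to the intrinsic distance
`d(p,q) = arccos ⟪p,q⟫`. -/
theorem stmt7 :
    ¬ ∃ mp : C(Hemi × Hemi, C(unitInterval, Hemi)),
      (∀ x : Hemi × Hemi, mp x 0 = x.1 ∧ mp x 1 = x.2) ∧
      ∀ x : Hemi × Hemi,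
        pathLen ⇑(mp x) = ENNReal.ofReal (Real.arccos ⟪x.1.1, x.2.1⟫_ℝ) := by
  rintro ⟨mp, hends, hlen⟩
  set γ : ℝ → I → EuclideanSpace ℝ (Fin 3) := fun θ t => mp (equatorHemi 0, equatorHemi θ) t
  have hγ₁ : ∀ θ t, ‖γ θ t‖ = 1 := fun θ t => (mp _ t).2.1
  have hγ_zero : ∀ θ, γ θ 0 = equator 0 := fun θ => congrArg Subtype.val (hends _).1
  have hγ_one : ∀ θ, γ θ 1 = equator θ := fun θ => congrArg Subtype.val (hends _).2
  have hside : ∀ θ, sin θ ≠ 0 → ∀ t, γ θ t 2 = 0 ∧ 0 ≤ γ θ t 1 * sin θ := by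
    intro θ hθ t
    apply two_eq_zero_and_mul_sin_nonneg_of_mem_span_equator
    rw [← hγ_zero θ, ← hγ_one θ]
    refine mem_span_of_eVariationOn_eq (by fun_prop) (hγ₁ θ) ?_ ?_ t <;> rw [hγ_zero, hγ_one]
    · rw [angle_eq_arccos_inner (norm_equator 0) (norm_equator θ)]
      -- the subspace metric of `Hemi` makes `pathLen` the variation of the underlying path
      exact hlen _
    · exact angle_equator_zero_ne_pi hθ
  obtain ⟨t, ht⟩ := exists_coord_ne_zero_of_path (γ := γ π) (by fun_prop) (hγ₁ π)
    (by simp [hγ_zero, equator]) (by simp [hγ_one, equator])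
  refine ht.elim (fun h => h ?_) (fun h => h ?_)
  · exact eq_zero_at_pi_of_mul_sin_nonneg (g := fun θ => γ θ t 1) (by fun_prop)
      fun θ hθ => (hside θ hθ t).2
  · exact eq_zero_at_pi_of_mul_sin_nonneg (g := fun θ => γ θ t 2) (by fun_prop)
      fun θ hθ => by simp [(hside θ hθ t).1]
end
end

section
/- Let X be a topological space. There exists a continuous global section of the endpoint fibration π : X^I → X × X, π(γ) = (γ(0), γ(1)), if and only if X is contractible. -/
open Set MeasureTheory unitInterval
open scoped Manifold ENNReal NNReal InnerProductSpace

noncomputable section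

namespace ContinuousMap

variable {X : Type*} [TopologicalSpace X]

def Homotopy.ofPathsTo (x₀ : X) (s : C(X, C(I, X))) (h₀ : ∀ x, s x 0 = x)
    (h₁ : ∀ x, s x 1 = x₀) : Homotopy (ContinuousMap.id X) (const X x₀) where
  toContinuousMap := s.uncurry.comp prodSwap
  map_zero_left := h₀
  map_one_left := h₁

theorem contractibleSpace_of_pathSection [Nonempty X] (s : C(X × X, C(I, X)))
    (hs : ∀ x : X × X, s x 0 = x.1 ∧ s x 1 = x.2) : ContractibleSpace X := by
  let x₀ : X := Classical.arbitrary X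
  let s₀ : C(X, C(I, X)) := s.comp ⟨fun x => (x, x₀), by fun_prop⟩
  exact (contractible_iff_id_nullhomotopic X).2
    ⟨x₀, ⟨.ofPathsTo x₀ s₀ (fun x => (hs (x, x₀)).1) (fun x => (hs (x, x₀)).2)⟩⟩

theorem exists_pathSection_of_homotopy {x₀ : X}
    (H : Homotopy (ContinuousMap.id X) (const X x₀)) :
    ∃ s : C(X × X, C(I, X)), ∀ x : X × X, s x 0 = x.1 ∧ s x 1 = x.2 := by
  let γ : ∀ x : X × X, Path x.1 x.2 := fun x => (H.evalAt x.1).trans (H.evalAt x.2).symm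
  have hγ : Continuous ↿γ :=
    Path.trans_continuous_family _ (H.continuous.comp (by fun_prop)) _
      (Path.symm_continuous_family _ (H.continuous.comp (by fun_prop)))
  exact ⟨curry ⟨↿γ, hγ⟩, fun x => ⟨(γ x).source, (γ x).target⟩⟩

theorem exists_pathSection_of_contractibleSpace [ContractibleSpace X] :
    ∃ s : C(X × X, C(I, X)), ∀ x : X × X, s x 0 = x.1 ∧ s x 1 = x.2 := by
  obtain ⟨x₀, ⟨H⟩⟩ := (contractible_iff_id_nullhomotopic X).1 ‹_›
  exact exists_pathSection_of_homotopy H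

end ContinuousMap

/-- Farber: a continuous global section of the endpoint fibration
`π : X^I → X × X` exists if and only if `X` is contractible. -/
theorem stmt14 (X : Type*) [TopologicalSpace X] [Nonempty X] :
    (∃ mp : C(X × X, C(unitInterval, X)),
      ∀ x : X × X, mp x 0 = x.1 ∧ mp x 1 = x.2) ↔ ContractibleSpace X :=
  ⟨fun ⟨mp, hmp⟩ => ContinuousMap.contractibleSpace_of_pathSection mp hmp,
    fun _ => ContinuousMap.exists_pathSection_of_contractibleSpace⟩
end
end

section
/- Let X be a compact metric space and let {G_i}_{i=0}^m be pairwise disjoint locally compact subsets covering X × X, with continuous maps σ_i : G_i → X^I that are sections of the endpoint fibration. If each G_i is Borel measurable and G_1, ..., G_m all have measure zero while σ₀ satisfies ℓ(σ₀(p,q)) = d(p,q) on G₀, then the combined planner σ satisfies ∫_{X×X} ℓ∘σ = ∫_{X×X} d, i.e., σ is efficient. -/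
open Set MeasureTheory unitInterval
open scoped Manifold ENNReal NNReal InnerProductSpace

noncomputable section

/-!
Off the `μ`-null set `⋃_{i ≠ 0} G i` every pair lies in `G 0`; there, by disjointness of the
domains, the planner outputs the path of `σ₀`, whose length is the distance. So the two
integrands agree `μ`-almost everywhere.
-/

namespace MotionPlanner

variable {X : Type*} [TopologicalSpace X] {m : ℕ}

theorem exists_mem_G (P : MotionPlanner X m) (x : X × X) : ∃ i, x ∈ P.G i :=
  mem_iUnion.1 (P.covers ▸ mem_univ x)

theorem path_eq_sec (P : MotionPlanner X m) {x : X × X} {i : Fin (m + 1)} (hx : x ∈ P.G i) :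
    P.path x = P.sec i ⟨x, hx⟩ := by
  obtain rfl : (P.exists_mem_G x).choose = i := by
    by_contra hne
    exact disjoint_left.mp (P.disj _ _ hne) (P.exists_mem_G x).choose_spec hx
  rfl

theorem ae_mem_G_of_measure_G_eq_zero [MeasurableSpace X] {μ : Measure (X × X)}
    (P : MotionPlanner X m) {j : Fin (m + 1)} (hzero : ∀ i, i ≠ j → μ (P.G i) = 0) :
    ∀ᵐ x ∂μ, x ∈ P.G j := by
  have hcompl : (P.G j)ᶜ ⊆ ⋃ i : {i // i ≠ j}, P.G i := by
    intro x hx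
    obtain ⟨i, hi⟩ := P.exists_mem_G x
    exact mem_iUnion.2 ⟨⟨i, fun h => hx (h ▸ hi)⟩, hi⟩
  exact measure_mono_null hcompl (measure_iUnion_null fun i => hzero i i.2)

end MotionPlanner

theorem stmt19_general (X : Type*) [MetricSpace X]
    [MeasurableSpace X] (μ : MeasureTheory.Measure (X × X)) {m : ℕ}
    (P : MotionPlanner X m)
    (hzero : ∀ i, i ≠ 0 → μ (P.G i) = 0)
    (heff : ∀ x : (P.G 0 : Set (X × X)),
      pathLen ⇑(P.sec 0 x) = edist (x : X × X).1 (x : X × X).2) :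
    P.length μ = ∫⁻ x : X × X, edist x.1 x.2 ∂μ := by
  refine lintegral_congr_ae ((P.ae_mem_G_of_measure_G_eq_zero hzero).mono fun x hx => ?_)
  exact (congrArg pathLen (P.path_eq_sec hx)).trans (heff ⟨x, hx⟩)

/-- if the domains of continuity of a motion planner are measurable, all of
them except `G 0` have measure zero, and the section over `G 0` outputs paths of length
`d(p,q)`, then the planner is efficient: `∫ ℓ∘σ = ∫ d`. -/
theorem stmt19 (X : Type*) [MetricSpace X] [CompactSpace X]
    [MeasurableSpace X] [BorelSpace X] (μ : MeasureTheory.Measure (X × X)) {m : ℕ}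
    (P : MotionPlanner X m)
    (hmeas : ∀ i, MeasurableSet (P.G i))
    (hzero : ∀ i, i ≠ 0 → μ (P.G i) = 0)
    (heff : ∀ x : (P.G 0 : Set (X × X)),
      pathLen ⇑(P.sec 0 x) = edist (x : X × X).1 (x : X × X).2) :
    P.length μ = ∫⁻ x : X × X, edist x.1 x.2 ∂μ :=
  stmt19_general X μ P hzero heff
end
end
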